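/- Let P be a commutative post-Lie algebra over ℂ and let {P,P} denote the ℂ-linear span of the set {{x,y} : x, y ∈ P}. If {P,P} = P (the Lie bracket is perfect), then the commutative multiplication is identically zero: x·y = 0 for all x, y ∈ P. -/
import Mathlib

set_option linter.unreachableTactic false
set_option linter.unusedTactic false
set_option linter.unnecessarySeqFocus false

set_option maxHeartbeats 1600000 in
private lemma cpa_key {P : Type*} [AddCommGroup P] [Module ℂ P]
    (mul br : P →ₗ[ℂ] P →ₗ[ℂ] P)
    (hcomm : ∀ x y : P, mul x y = mul y x)
    (halt : ∀ x : P, br x x = 0)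
    (hjac : ∀ x y z : P, br (br x y) z + br (br y z) x + br (br z x) y = 0)
    (hpl1 : ∀ x y z : P, mul (br x y) z = mul x (mul y z) - mul y (mul x z))
    (hpl2 : ∀ x y z : P, mul x (br y z) = br (mul x y) z + br y (mul x z))
    (x y z w : P) : mul (br x y) (mul z w) = 0 := by
  have hskew : ∀ a b : P, br a b + br b a = 0 := by
    intro a b
    have h := halt (a + b)
    simp only [map_add, LinearMap.add_apply, halt a, halt b, zero_add, add_zero] at h
    simpa [add_comm] using h
  have h0 : (mul x (mul y (mul z w - mul w z))) = 0 := by rw [hcomm z w] <;> simp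
  have h1 : (mul x (mul y (br z w) - mul (br z w) y)) = 0 := by rw [hcomm y (br z w)] <;> simp
  have h2 : (br x (mul y (br z w) - mul (br z w) y)) = 0 := by rw [hcomm y (br z w)] <;> simp
  have h3 : (mul x (br y (br z w)) - mul (br y (br z w)) x) = 0 := by rw [hcomm x (br y (br z w))] <;> simp
  have h4 : (mul x (br y (br z w) + br (br z w) y)) = 0 := by rw [hskew y (br z w)] <;> simp
  have h5 : (br x (mul z (mul y w - mul w y))) = 0 := by rw [hcomm y w] <;> simp
  have h6 : (mul x (br z (mul y w)) - mul (br z (mul y w)) x) = 0 := by rw [hcomm x (br z (mul y w))] <;> simp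
  have h7 : (mul x (mul z (br y w) - mul (br y w) z)) = 0 := by rw [hcomm z (br y w)] <;> simp
  have h8 : (mul x (br z (br y w)) - mul (br z (br y w)) x) = 0 := by rw [hcomm x (br z (br y w))] <;> simp
  have h9 : (mul x (br z (br y w + br w y))) = 0 := by rw [hskew y w] <;> simp
  have h10 : (mul x (br z (br w y) + br (br w y) z)) = 0 := by rw [hskew z (br w y)] <;> simp
  have h11 : (mul x (mul w (mul y z) - mul (mul y z) w)) = 0 := by rw [hcomm w (mul y z)] <;> simp
  have h12 : (br x (mul w (mul y z - mul z y))) = 0 := by rw [hcomm y z] <;> simp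
  have h13 : (mul x (br w (mul y z)) - mul (br w (mul y z)) x) = 0 := by rw [hcomm x (br w (mul y z))] <;> simp
  have h14 : (mul x (br w (mul y z) + br (mul y z) w)) = 0 := by rw [hskew w (mul y z)] <;> simp
  have h15 : (mul x (mul w (br y z) - mul (br y z) w)) = 0 := by rw [hcomm w (br y z)] <;> simp
  have h16 : (mul x (br w (br y z)) - mul (br w (br y z)) x) = 0 := by rw [hcomm x (br w (br y z))] <;> simp
  have h17 : (mul x (br w (br y z) + br (br y z) w)) = 0 := by rw [hskew w (br y z)] <;> simp
  have h18 : (mul y (mul x (mul z w - mul w z))) = 0 := by rw [hcomm z w] <;> simp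
  have h19 : (mul y (mul x (br z w) - mul (br z w) x)) = 0 := by rw [hcomm x (br z w)] <;> simp
  have h20 : (br y (mul x (br z w) - mul (br z w) x)) = 0 := by rw [hcomm x (br z w)] <;> simp
  have h21 : (mul y (br x (br z w)) - mul (br x (br z w)) y) = 0 := by rw [hcomm y (br x (br z w))] <;> simp
  have h22 : (mul y (br x (br z w) + br (br z w) x)) = 0 := by rw [hskew x (br z w)] <;> simp
  have h23 : (br y (mul z (mul x w - mul w x))) = 0 := by rw [hcomm x w] <;> simp
  have h24 : (mul y (br z (mul x w)) - mul (br z (mul x w)) y) = 0 := by rw [hcomm y (br z (mul x w))] <;> simp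
  have h25 : (mul y (mul z (br x w) - mul (br x w) z)) = 0 := by rw [hcomm z (br x w)] <;> simp
  have h26 : (mul y (br z (br x w)) - mul (br z (br x w)) y) = 0 := by rw [hcomm y (br z (br x w))] <;> simp
  have h27 : (mul y (br z (br x w + br w x))) = 0 := by rw [hskew x w] <;> simp
  have h28 : (mul y (br z (br w x) + br (br w x) z)) = 0 := by rw [hskew z (br w x)] <;> simp
  have h29 : (mul y (mul w (mul x z) - mul (mul x z) w)) = 0 := by rw [hcomm w (mul x z)] <;> simp
  have h30 : (br y (mul w (mul x z - mul z x))) = 0 := by rw [hcomm x z] <;> simp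
  have h31 : (mul y (br w (mul x z)) - mul (br w (mul x z)) y) = 0 := by rw [hcomm y (br w (mul x z))] <;> simp
  have h32 : (mul y (br w (mul x z) + br (mul x z) w)) = 0 := by rw [hskew w (mul x z)] <;> simp
  have h33 : (mul y (mul w (br x z) - mul (br x z) w)) = 0 := by rw [hcomm w (br x z)] <;> simp
  have h34 : (mul y (br w (br x z)) - mul (br w (br x z)) y) = 0 := by rw [hcomm y (br w (br x z))] <;> simp
  have h35 : (mul y (br w (br x z) + br (br x z) w)) = 0 := by rw [hskew w (br x z)] <;> simp
  have h36 : (mul z (mul x (mul y w) - mul (mul y w) x)) = 0 := by rw [hcomm x (mul y w)] <;> simp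
  have h37 : (mul z (mul x (br y w) - mul (br y w) x)) = 0 := by rw [hcomm x (br y w)] <;> simp
  have h38 : (mul z (mul y (mul x w) - mul (mul x w) y)) = 0 := by rw [hcomm y (mul x w)] <;> simp
  have h39 : (mul z (mul y (br x w) - mul (br x w) y)) = 0 := by rw [hcomm y (br x w)] <;> simp
  have h40 : (mul z (br w (mul x y) + br (mul x y) w)) = 0 := by rw [hskew w (mul x y)] <;> simp
  have h41 : (mul z (br w (mul x y - mul y x))) = 0 := by rw [hcomm x y] <;> simp
  have h42 : (mul z (br w (mul y x) + br (mul y x) w)) = 0 := by rw [hskew w (mul y x)] <;> simp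
  have h43 : (mul w (mul x (mul y z) - mul (mul y z) x)) = 0 := by rw [hcomm x (mul y z)] <;> simp
  have h44 : (mul w (br x (mul y z)) - mul (br x (mul y z)) w) = 0 := by rw [hcomm w (br x (mul y z))] <;> simp
  have h45 : (mul w (mul x (br y z) - mul (br y z) x)) = 0 := by rw [hcomm x (br y z)] <;> simp
  have h46 : (mul w (mul y (mul x z) - mul (mul x z) y)) = 0 := by rw [hcomm y (mul x z)] <;> simp
  have h47 : (mul w (br y (mul x z)) - mul (br y (mul x z)) w) = 0 := by rw [hcomm w (br y (mul x z))] <;> simp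
  have h48 : (mul w (mul y (br x z) - mul (br x z) y)) = 0 := by rw [hcomm y (br x z)] <;> simp
  have h49 : (mul (mul x y) (br z w) - mul (br z w) (mul x y)) = 0 := by rw [hcomm (mul x y) (br z w)] <;> simp
  have h50 : (mul (mul x y - mul y x) (br z w)) = 0 := by rw [hcomm x y] <;> simp
  have h51 : (br (mul x y - mul y x) (br z w)) = 0 := by rw [hcomm x y] <;> simp
  have h52 : (mul (mul y x) (br z w) - mul (br z w) (mul y x)) = 0 := by rw [hcomm (mul y x) (br z w)] <;> simp
  have h53 : (mul (mul x z - mul z x) (mul y w)) = 0 := by rw [hcomm x z] <;> simp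
  have h54 : (mul (mul x z) (mul y w - mul w y)) = 0 := by rw [hcomm y w] <;> simp
  have h55 : (br (mul x z - mul z x) (mul y w)) = 0 := by rw [hcomm x z] <;> simp
  have h56 : (br (mul x z) (mul y w - mul w y)) = 0 := by rw [hcomm y w] <;> simp
  have h57 : (mul (mul x z) (br y w) - mul (br y w) (mul x z)) = 0 := by rw [hcomm (mul x z) (br y w)] <;> simp
  have h58 : (mul (mul x z - mul z x) (br y w)) = 0 := by rw [hcomm x z] <;> simp
  have h59 : (br (mul x z) (mul w y) + br (mul w y) (mul x z)) = 0 := by rw [hskew (mul x z) (mul w y)] <;> simp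
  have h60 : (mul (br x z) (mul y w - mul w y)) = 0 := by rw [hcomm y w] <;> simp
  have h61 : (mul (br x z) (br y w) - mul (br y w) (br x z)) = 0 := by rw [hcomm (br x z) (br y w)] <;> simp
  have h62 : (mul (mul z x) (mul y w) - mul (mul y w) (mul z x)) = 0 := by rw [hcomm (mul z x) (mul y w)] <;> simp
  have h63 : (mul (mul z x) (br y w) - mul (br y w) (mul z x)) = 0 := by rw [hcomm (mul z x) (br y w)] <;> simp
  have h64 : (mul (mul x w) (mul y z) - mul (mul y z) (mul x w)) = 0 := by rw [hcomm (mul x w) (mul y z)] <;> simp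
  have h65 : (mul (mul x w - mul w x) (mul y z)) = 0 := by rw [hcomm x w] <;> simp
  have h66 : (mul (mul x w) (mul y z - mul z y)) = 0 := by rw [hcomm y z] <;> simp
  have h67 : (br (mul x w - mul w x) (mul y z)) = 0 := by rw [hcomm x w] <;> simp
  have h68 : (br (mul x w) (mul y z - mul z y)) = 0 := by rw [hcomm y z] <;> simp
  have h69 : (mul (mul x w) (br y z) - mul (br y z) (mul x w)) = 0 := by rw [hcomm (mul x w) (br y z)] <;> simp
  have h70 : (mul (mul x w - mul w x) (br y z)) = 0 := by rw [hcomm x w] <;> simp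
  have h71 : (br (mul x w) (mul z y) + br (mul z y) (mul x w)) = 0 := by rw [hskew (mul x w) (mul z y)] <;> simp
  have h72 : (mul (br x w) (mul y z - mul z y)) = 0 := by rw [hcomm y z] <;> simp
  have h73 : (mul (br x w) (br y z) - mul (br y z) (br x w)) = 0 := by rw [hcomm (br x w) (br y z)] <;> simp
  have h74 : (mul (mul w x) (mul y z) - mul (mul y z) (mul w x)) = 0 := by rw [hcomm (mul w x) (mul y z)] <;> simp
  have h75 : (mul (mul w x) (br y z) - mul (br y z) (mul w x)) = 0 := by rw [hcomm (mul w x) (br y z)] <;> simp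
  have h76 : (mul (br x y) (mul z w) - (mul x (mul y (mul z w)) - mul y (mul x (mul z w)))) = 0 := by rw [hpl1 x y (mul z w)] <;> simp
  have h77 : (mul x (br y (br z w)) - (br (mul x y) (br z w) + br y (mul x (br z w)))) = 0 := by rw [hpl2 x y (br z w)] <;> simp
  have h78 : (mul (br x (br z w)) y - (mul x (mul (br z w) y) - mul (br z w) (mul x y))) = 0 := by rw [hpl1 x (br z w) y] <;> simp
  have h79 : (mul y (br x (br z w)) - (br (mul y x) (br z w) + br x (mul y (br z w)))) = 0 := by rw [hpl2 y x (br z w)] <;> simp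
  have h80 : (mul (br y (br z w)) x - (mul y (mul (br z w) x) - mul (br z w) (mul y x))) = 0 := by rw [hpl1 y (br z w) x] <;> simp
  have h81 : (mul (br x z) (mul y w) - (mul x (mul z (mul y w)) - mul z (mul x (mul y w)))) = 0 := by rw [hpl1 x z (mul y w)] <;> simp
  have h82 : (mul (br x z) (br y w) - (mul x (mul z (br y w)) - mul z (mul x (br y w)))) = 0 := by rw [hpl1 x z (br y w)] <;> simp
  have h83 : (mul z (br x (mul y w)) - (br (mul z x) (mul y w) + br x (mul z (mul y w)))) = 0 := by rw [hpl2 z x (mul y w)] <;> simp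
  have h84 : (mul (br z (mul y w)) x - (mul z (mul (mul y w) x) - mul (mul y w) (mul z x))) = 0 := by rw [hpl1 z (mul y w) x] <;> simp
  have h85 : (mul (br z (br y w)) x - (mul z (mul (br y w) x) - mul (br y w) (mul z x))) = 0 := by rw [hpl1 z (br y w) x] <;> simp
  have h86 : (mul (br x w) (mul y z) - (mul x (mul w (mul y z)) - mul w (mul x (mul y z)))) = 0 := by rw [hpl1 x w (mul y z)] <;> simp
  have h87 : (mul (br x w) (br y z) - (mul x (mul w (br y z)) - mul w (mul x (br y z)))) = 0 := by rw [hpl1 x w (br y z)] <;> simp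
  have h88 : (mul (br x (mul y z)) w - (mul x (mul (mul y z) w) - mul (mul y z) (mul x w))) = 0 := by rw [hpl1 x (mul y z) w] <;> simp
  have h89 : (mul w (br x (mul y z)) - (br (mul w x) (mul y z) + br x (mul w (mul y z)))) = 0 := by rw [hpl2 w x (mul y z)] <;> simp
  have h90 : (mul (br w (mul y z)) x - (mul w (mul (mul y z) x) - mul (mul y z) (mul w x))) = 0 := by rw [hpl1 w (mul y z) x] <;> simp
  have h91 : (mul (br w (br y z)) x - (mul w (mul (br y z) x) - mul (br y z) (mul w x))) = 0 := by rw [hpl1 w (br y z) x] <;> simp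
  have h92 : (mul (br y z) (mul x w) - (mul y (mul z (mul x w)) - mul z (mul y (mul x w)))) = 0 := by rw [hpl1 y z (mul x w)] <;> simp
  have h93 : (mul (br y z) (br x w) - (mul y (mul z (br x w)) - mul z (mul y (br x w)))) = 0 := by rw [hpl1 y z (br x w)] <;> simp
  have h94 : (mul z (br y (mul x w)) - (br (mul z y) (mul x w) + br y (mul z (mul x w)))) = 0 := by rw [hpl2 z y (mul x w)] <;> simp
  have h95 : (mul (br z (mul x w)) y - (mul z (mul (mul x w) y) - mul (mul x w) (mul z y))) = 0 := by rw [hpl1 z (mul x w) y] <;> simp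
  have h96 : (mul (br z (br x w)) y - (mul z (mul (br x w) y) - mul (br x w) (mul z y))) = 0 := by rw [hpl1 z (br x w) y] <;> simp
  have h97 : (mul (br y w) (mul x z) - (mul y (mul w (mul x z)) - mul w (mul y (mul x z)))) = 0 := by rw [hpl1 y w (mul x z)] <;> simp
  have h98 : (mul (br y w) (br x z) - (mul y (mul w (br x z)) - mul w (mul y (br x z)))) = 0 := by rw [hpl1 y w (br x z)] <;> simp
  have h99 : (mul (br y (mul x z)) w - (mul y (mul (mul x z) w) - mul (mul x z) (mul y w))) = 0 := by rw [hpl1 y (mul x z) w] <;> simp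
  have h100 : (mul w (br y (mul x z)) - (br (mul w y) (mul x z) + br y (mul w (mul x z)))) = 0 := by rw [hpl2 w y (mul x z)] <;> simp
  have h101 : (mul (br w (mul x z)) y - (mul w (mul (mul x z) y) - mul (mul x z) (mul w y))) = 0 := by rw [hpl1 w (mul x z) y] <;> simp
  have h102 : (mul (br w (br x z)) y - (mul w (mul (br x z) y) - mul (br x z) (mul w y))) = 0 := by rw [hpl1 w (br x z) y] <;> simp
  have h103 : (mul x (br (br y z) w + br (br z w) y + br (br w y) z)) = 0 := by rw [hjac y z w] <;> simp
  have h104 : (mul x (mul (br y z) w - (mul y (mul z w) - mul z (mul y w)))) = 0 := by rw [hpl1 y z w] <;> simp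
  have h105 : (mul x (mul y (br z w) - (br (mul y z) w + br z (mul y w)))) = 0 := by rw [hpl2 y z w] <;> simp
  have h106 : (mul x (mul (br y w) z - (mul y (mul w z) - mul w (mul y z)))) = 0 := by rw [hpl1 y w z] <;> simp
  have h107 : (br x (mul (br z w) y - (mul z (mul w y) - mul w (mul z y)))) = 0 := by rw [hpl1 z w y] <;> simp
  have h108 : (mul y (br (br x z) w + br (br z w) x + br (br w x) z)) = 0 := by rw [hjac x z w] <;> simp
  have h109 : (mul y (mul (br x z) w - (mul x (mul z w) - mul z (mul x w)))) = 0 := by rw [hpl1 x z w] <;> simp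
  have h110 : (mul y (mul x (br z w) - (br (mul x z) w + br z (mul x w)))) = 0 := by rw [hpl2 x z w] <;> simp
  have h111 : (mul y (mul (br x w) z - (mul x (mul w z) - mul w (mul x z)))) = 0 := by rw [hpl1 x w z] <;> simp
  have h112 : (br y (mul (br z w) x - (mul z (mul w x) - mul w (mul z x)))) = 0 := by rw [hpl1 z w x] <;> simp
  have h113 : (mul z (mul x (br y w) - (br (mul x y) w + br y (mul x w)))) = 0 := by rw [hpl2 x y w] <;> simp
  have h114 : (mul z (mul y (br x w) - (br (mul y x) w + br x (mul y w)))) = 0 := by rw [hpl2 y x w] <;> simp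
  have keyeq : (2 : ℤ) • (mul (br x y) (mul z w)) =
      (mul x (mul y (mul z w - mul w z))) +
      (mul x (mul y (br z w) - mul (br z w) y)) +
      (2 : ℤ) • (br x (mul y (br z w) - mul (br z w) y)) +
      (mul x (br y (br z w)) - mul (br y (br z w)) x) +
      (mul x (br y (br z w) + br (br z w) y)) +
      (-2 : ℤ) • (br x (mul z (mul y w - mul w y))) +
      -(mul x (br z (mul y w)) - mul (br z (mul y w)) x) +
      -(mul x (mul z (br y w) - mul (br y w) z)) +
      (mul x (br z (br y w)) - mul (br z (br y w)) x) +
      -(mul x (br z (br y w + br w y))) +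
      (mul x (br z (br w y) + br (br w y) z)) +
      (2 : ℤ) • (mul x (mul w (mul y z) - mul (mul y z) w)) +
      (2 : ℤ) • (br x (mul w (mul y z - mul z y))) +
      (mul x (br w (mul y z)) - mul (br w (mul y z)) x) +
      -(mul x (br w (mul y z) + br (mul y z) w)) +
      -(mul x (mul w (br y z) - mul (br y z) w)) +
      -(mul x (br w (br y z)) - mul (br w (br y z)) x) +
      (mul x (br w (br y z) + br (br y z) w)) +
      -(mul y (mul x (mul z w - mul w z))) +
      -(mul y (mul x (br z w) - mul (br z w) x)) +
      (-2 : ℤ) • (br y (mul x (br z w) - mul (br z w) x)) +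
      -(mul y (br x (br z w)) - mul (br x (br z w)) y) +
      -(mul y (br x (br z w) + br (br z w) x)) +
      (2 : ℤ) • (br y (mul z (mul x w - mul w x))) +
      (mul y (br z (mul x w)) - mul (br z (mul x w)) y) +
      (mul y (mul z (br x w) - mul (br x w) z)) +
      -(mul y (br z (br x w)) - mul (br z (br x w)) y) +
      (mul y (br z (br x w + br w x))) +
      -(mul y (br z (br w x) + br (br w x) z)) +
      (-2 : ℤ) • (mul y (mul w (mul x z) - mul (mul x z) w)) +
      (-2 : ℤ) • (br y (mul w (mul x z - mul z x))) +
      -(mul y (br w (mul x z)) - mul (br w (mul x z)) y) +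
      (mul y (br w (mul x z) + br (mul x z) w)) +
      (mul y (mul w (br x z) - mul (br x z) w)) +
      (mul y (br w (br x z)) - mul (br w (br x z)) y) +
      -(mul y (br w (br x z) + br (br x z) w)) +
      (mul z (mul x (mul y w) - mul (mul y w) x)) +
      -(mul z (mul x (br y w) - mul (br y w) x)) +
      -(mul z (mul y (mul x w) - mul (mul x w) y)) +
      (mul z (mul y (br x w) - mul (br x w) y)) +
      (2 : ℤ) • (mul z (br w (mul x y) + br (mul x y) w)) +
      (-2 : ℤ) • (mul z (br w (mul x y - mul y x))) +
      (-2 : ℤ) • (mul z (br w (mul y x) + br (mul y x) w)) +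
      -(mul w (mul x (mul y z) - mul (mul y z) x)) +
      (-2 : ℤ) • (mul w (br x (mul y z)) - mul (br x (mul y z)) w) +
      (mul w (mul x (br y z) - mul (br y z) x)) +
      (mul w (mul y (mul x z) - mul (mul x z) y)) +
      (2 : ℤ) • (mul w (br y (mul x z)) - mul (br y (mul x z)) w) +
      -(mul w (mul y (br x z) - mul (br x z) y)) +
      -(mul (mul x y) (br z w) - mul (br z w) (mul x y)) +
      (mul (mul x y - mul y x) (br z w)) +
      (-2 : ℤ) • (br (mul x y - mul y x) (br z w)) +
      (mul (mul y x) (br z w) - mul (br z w) (mul y x)) +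
      -(mul (mul x z - mul z x) (mul y w)) +
      -(mul (mul x z) (mul y w - mul w y)) +
      (2 : ℤ) • (br (mul x z - mul z x) (mul y w)) +
      (-2 : ℤ) • (br (mul x z) (mul y w - mul w y)) +
      -(mul (mul x z) (br y w) - mul (br y w) (mul x z)) +
      (mul (mul x z - mul z x) (br y w)) +
      (-2 : ℤ) • (br (mul x z) (mul w y) + br (mul w y) (mul x z)) +
      (mul (br x z) (mul y w - mul w y)) +
      (mul (br x z) (br y w) - mul (br y w) (br x z)) +
      -(mul (mul z x) (mul y w) - mul (mul y w) (mul z x)) +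
      (mul (mul z x) (br y w) - mul (br y w) (mul z x)) +
      (-2 : ℤ) • (mul (mul x w) (mul y z) - mul (mul y z) (mul x w)) +
      (mul (mul x w - mul w x) (mul y z)) +
      (mul (mul x w) (mul y z - mul z y)) +
      (-2 : ℤ) • (br (mul x w - mul w x) (mul y z)) +
      (2 : ℤ) • (br (mul x w) (mul y z - mul z y)) +
      (mul (mul x w) (br y z) - mul (br y z) (mul x w)) +
      -(mul (mul x w - mul w x) (br y z)) +
      (2 : ℤ) • (br (mul x w) (mul z y) + br (mul z y) (mul x w)) +
      -(mul (br x w) (mul y z - mul z y)) +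
      (mul (br x w) (br y z) - mul (br y z) (br x w)) +
      (mul (mul w x) (mul y z) - mul (mul y z) (mul w x)) +
      -(mul (mul w x) (br y z) - mul (br y z) (mul w x)) +
      (2 : ℤ) • (mul (br x y) (mul z w) - (mul x (mul y (mul z w)) - mul y (mul x (mul z w)))) +
      (-2 : ℤ) • (mul x (br y (br z w)) - (br (mul x y) (br z w) + br y (mul x (br z w)))) +
      -(mul (br x (br z w)) y - (mul x (mul (br z w) y) - mul (br z w) (mul x y))) +
      (2 : ℤ) • (mul y (br x (br z w)) - (br (mul y x) (br z w) + br x (mul y (br z w)))) +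
      (mul (br y (br z w)) x - (mul y (mul (br z w) x) - mul (br z w) (mul y x))) +
      -(mul (br x z) (mul y w) - (mul x (mul z (mul y w)) - mul z (mul x (mul y w)))) +
      -(mul (br x z) (br y w) - (mul x (mul z (br y w)) - mul z (mul x (br y w)))) +
      (-2 : ℤ) • (mul z (br x (mul y w)) - (br (mul z x) (mul y w) + br x (mul z (mul y w)))) +
      -(mul (br z (mul y w)) x - (mul z (mul (mul y w) x) - mul (mul y w) (mul z x))) +
      (mul (br z (br y w)) x - (mul z (mul (br y w) x) - mul (br y w) (mul z x))) +
      (mul (br x w) (mul y z) - (mul x (mul w (mul y z)) - mul w (mul x (mul y z)))) +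
      -(mul (br x w) (br y z) - (mul x (mul w (br y z)) - mul w (mul x (br y z)))) +
      (-2 : ℤ) • (mul (br x (mul y z)) w - (mul x (mul (mul y z) w) - mul (mul y z) (mul x w))) +
      (2 : ℤ) • (mul w (br x (mul y z)) - (br (mul w x) (mul y z) + br x (mul w (mul y z)))) +
      (mul (br w (mul y z)) x - (mul w (mul (mul y z) x) - mul (mul y z) (mul w x))) +
      -(mul (br w (br y z)) x - (mul w (mul (br y z) x) - mul (br y z) (mul w x))) +
      (mul (br y z) (mul x w) - (mul y (mul z (mul x w)) - mul z (mul y (mul x w)))) +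
      (mul (br y z) (br x w) - (mul y (mul z (br x w)) - mul z (mul y (br x w)))) +
      (2 : ℤ) • (mul z (br y (mul x w)) - (br (mul z y) (mul x w) + br y (mul z (mul x w)))) +
      (mul (br z (mul x w)) y - (mul z (mul (mul x w) y) - mul (mul x w) (mul z y))) +
      -(mul (br z (br x w)) y - (mul z (mul (br x w) y) - mul (br x w) (mul z y))) +
      -(mul (br y w) (mul x z) - (mul y (mul w (mul x z)) - mul w (mul y (mul x z)))) +
      (mul (br y w) (br x z) - (mul y (mul w (br x z)) - mul w (mul y (br x z)))) +
      (2 : ℤ) • (mul (br y (mul x z)) w - (mul y (mul (mul x z) w) - mul (mul x z) (mul y w))) +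
      (-2 : ℤ) • (mul w (br y (mul x z)) - (br (mul w y) (mul x z) + br y (mul w (mul x z)))) +
      -(mul (br w (mul x z)) y - (mul w (mul (mul x z) y) - mul (mul x z) (mul w y))) +
      (mul (br w (br x z)) y - (mul w (mul (br x z) y) - mul (br x z) (mul w y))) +
      -(mul x (br (br y z) w + br (br z w) y + br (br w y) z)) +
      -(mul x (mul (br y z) w - (mul y (mul z w) - mul z (mul y w)))) +
      -(mul x (mul y (br z w) - (br (mul y z) w + br z (mul y w)))) +
      -(mul x (mul (br y w) z - (mul y (mul w z) - mul w (mul y z)))) +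
      (2 : ℤ) • (br x (mul (br z w) y - (mul z (mul w y) - mul w (mul z y)))) +
      (mul y (br (br x z) w + br (br z w) x + br (br w x) z)) +
      (mul y (mul (br x z) w - (mul x (mul z w) - mul z (mul x w)))) +
      (mul y (mul x (br z w) - (br (mul x z) w + br z (mul x w)))) +
      (mul y (mul (br x w) z - (mul x (mul w z) - mul w (mul x z)))) +
      (-2 : ℤ) • (br y (mul (br z w) x - (mul z (mul w x) - mul w (mul z x)))) +
      (2 : ℤ) • (mul z (mul x (br y w) - (br (mul x y) w + br y (mul x w)))) +
      (-2 : ℤ) • (mul z (mul y (br x w) - (br (mul y x) w + br x (mul y w)))) := by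
    simp only [map_add, map_sub, map_neg, map_zero, LinearMap.add_apply,
      LinearMap.sub_apply, LinearMap.neg_apply, LinearMap.zero_apply]
    abel
  rw [h0, h1, h2, h3, h4, h5, h6, h7, h8, h9, h10, h11, h12, h13, h14, h15, h16, h17, h18, h19, h20, h21, h22, h23, h24, h25, h26, h27, h28, h29, h30, h31, h32, h33, h34, h35, h36, h37, h38, h39, h40, h41, h42, h43, h44, h45, h46, h47, h48, h49, h50, h51, h52, h53, h54, h55, h56, h57, h58, h59, h60, h61, h62, h63, h64, h65, h66, h67, h68, h69, h70, h71, h72, h73, h74, h75, h76, h77, h78, h79, h80, h81, h82, h83, h84, h85, h86, h87, h88, h89, h90, h91, h92, h93, h94, h95, h96, h97, h98, h99, h100, h101, h102, h103, h104, h105, h106, h107, h108, h109, h110, h111, h112, h113, h114] at keyeq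
  simp only [smul_zero, neg_zero, add_zero, zero_add] at keyeq
  have h2 : ((2 : ℤ) : ℂ) • (mul (br x y) (mul z w)) = 0 := by
    rw [Int.cast_smul_eq_zsmul]; exact keyeq
  have := smul_eq_zero.mp h2
  simpa using this

/-- If the Lie bracket of a commutative post-Lie algebra `P` over ℂ is perfect
(`{P,P} = P`), then the commutative multiplication is identically zero. -/
theorem cpa_perfect_bracket_mul_eq_zero {P : Type*} [AddCommGroup P] [Module ℂ P]
    (mul br : P →ₗ[ℂ] P →ₗ[ℂ] P)
    (hcomm : ∀ x y : P, mul x y = mul y x)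
    (halt : ∀ x : P, br x x = 0)
    (hjac : ∀ x y z : P, br (br x y) z + br (br y z) x + br (br z x) y = 0)
    (hpl1 : ∀ x y z : P, mul (br x y) z = mul x (mul y z) - mul y (mul x z))
    (hpl2 : ∀ x y z : P, mul x (br y z) = br (mul x y) z + br y (mul x z))
    (hperf : Submodule.span ℂ {u : P | ∃ x y : P, u = br x y} = ⊤) :
    ∀ x y : P, mul x y = 0 := by
  have key : ∀ x y z w : P, mul (br x y) (mul z w) = 0 :=
    fun x y z w => cpa_key mul br hcomm halt hjac hpl1 hpl2 x y z w
  have key2 : ∀ a b c d e : P, mul (br (br a b) (br c d)) e = 0 := by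
    intro a b c d e
    rw [hpl1, key a b (br c d) e, key c d (br a b) e, sub_zero]
  have hmem : ∀ v : P, v ∈ Submodule.span ℂ {u : P | ∃ x y : P, u = br x y} := by
    intro v; rw [hperf]; exact Submodule.mem_top
  have step1 : ∀ a b v e : P, mul (br (br a b) v) e = 0 := by
    intro a b v e
    induction hmem v using Submodule.span_induction with
    | mem u hu => obtain ⟨c, d, rfl⟩ := hu; exact key2 a b c d e
    | zero => simp
    | add u w _ _ hu hw => simp [map_add, LinearMap.add_apply, hu, hw]
    | smul t u _ hu => simp [map_smul, LinearMap.smul_apply, hu]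
  have step2 : ∀ u v e : P, mul (br u v) e = 0 := by
    intro u v e
    induction hmem u using Submodule.span_induction with
    | mem u hu => obtain ⟨a, b, rfl⟩ := hu; exact step1 a b v e
    | zero => simp
    | add p q _ _ hp hq =>
        have : br (p + q) v = br p v + br q v := by simp [map_add]
        simp [this, map_add, LinearMap.add_apply, hp, hq]
    | smul t p _ hp =>
        have : br (t • p) v = t • br p v := by simp
        simp [this, hp]
  intro x y
  induction hmem x using Submodule.span_induction with
  | mem u hu => obtain ⟨a, b, rfl⟩ := hu; exact step2 a b y
  | zero => simp
  | add p q _ _ hp hq =>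
      have : mul (p + q) y = mul p y + mul q y := by simp [map_add]
      rw [this, hp, hq, add_zero]
  | smul t p _ hp =>
      have : mul (t • p) y = t • mul p y := by simp
      rw [this, hp, smul_zero]
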